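/- Let G be a group acting on a type X and let j be a natural number. On pairs (φ, y), where φ : G → Perm(Fin j) and y : Fin j → X, define a right action of Perm(Fin j) by (φ, y) · σ = ((h ↦ φ(h) * σ), (i ↦ y(σ(i)))) and a left action of G by g · (φ, y) = ((h ↦ φ(g⁻¹ h)), (i ↦ g • y(i))); these actions commute, so G acts on the set of Perm(Fin j)-orbits. Then the assignment sending a pair (β, y), where β : G → Perm(Fin j) is a group homomorphism and y : Fin j → X satisfies y(β(g)(i)) = g • y(i) for all g and i, to the Perm(Fin j)-orbit of ((g ↦ β(g⁻¹)), y), is a bijection onto the set of G-fixed Perm(Fin j)-orbits. -/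

import Mathlib

/-- The right action of `σ ∈ Perm (Fin j)` on pairs `(φ, y)`:
`(φ, y) · σ = ((h ↦ φ h * σ), (i ↦ y (σ i)))`. -/
def pairRightAct {G X : Type*} [Group G] {j : ℕ}
    (p : (G → Equiv.Perm (Fin j)) × (Fin j → X)) (σ : Equiv.Perm (Fin j)) :
    (G → Equiv.Perm (Fin j)) × (Fin j → X) :=
  ((fun h => p.1 h * σ), fun i => p.2 (σ i))

/-- The left action of `g ∈ G` on pairs `(φ, y)`:
`g · (φ, y) = ((h ↦ φ (g⁻¹ h)), (i ↦ g • y i))`. -/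
def pairLeftAct {G X : Type*} [Group G] [MulAction G X] {j : ℕ} (g : G)
    (p : (G → Equiv.Perm (Fin j)) × (Fin j → X)) :
    (G → Equiv.Perm (Fin j)) × (Fin j → X) :=
  ((fun h => p.1 (g⁻¹ * h)), fun i => g • p.2 i)

lemma pairRightAct_one {G X : Type*} [Group G] {j : ℕ}
    (p : (G → Equiv.Perm (Fin j)) × (Fin j → X)) : pairRightAct p 1 = p := by
  cases p; simp [pairRightAct]

lemma pairRightAct_mul {G X : Type*} [Group G] {j : ℕ}
    (p : (G → Equiv.Perm (Fin j)) × (Fin j → X)) (σ τ : Equiv.Perm (Fin j)) :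
    pairRightAct (pairRightAct p σ) τ = pairRightAct p (σ * τ) := by
  cases p; simp [pairRightAct, mul_assoc]

/-- The setoid of `Perm (Fin j)`-orbits of pairs `(φ, y)`. -/
def pairSetoid (G X : Type*) [Group G] [MulAction G X] (j : ℕ) :
    Setoid ((G → Equiv.Perm (Fin j)) × (Fin j → X)) where
  r p q := ∃ σ : Equiv.Perm (Fin j), pairRightAct p σ = q
  iseqv := by
    constructor
    · exact fun p => ⟨1, pairRightAct_one p⟩
    · rintro p q ⟨σ, rfl⟩
      exact ⟨σ⁻¹, by rw [pairRightAct_mul]; simp [pairRightAct_one]⟩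
    · rintro p q r ⟨σ, rfl⟩ ⟨τ, rfl⟩
      exact ⟨σ * τ, (pairRightAct_mul p σ τ)⟩

lemma pairLeftAct_pairRightAct {G X : Type*} [Group G] [MulAction G X] {j : ℕ}
    (g : G) (p : (G → Equiv.Perm (Fin j)) × (Fin j → X)) (σ : Equiv.Perm (Fin j)) :
    pairLeftAct g (pairRightAct p σ) = pairRightAct (pairLeftAct g p) σ := rfl

/-- Since the two actions commute, `G` acts on the set of `Perm (Fin j)`-orbits. -/
def pairLeftActOrbit {G X : Type*} [Group G] [MulAction G X] {j : ℕ} (g : G)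
    (o : Quotient (pairSetoid G X j)) : Quotient (pairSetoid G X j) :=
  Quotient.liftOn o (fun p => Quotient.mk (pairSetoid G X j) (pairLeftAct g p))
    (fun p q hpq => Quotient.sound (by
      obtain ⟨σ, rfl⟩ := hpq
      exact ⟨σ, (pairLeftAct_pairRightAct g p σ).symm⟩))

/-!
A pair `(φ, y)` whose orbit is `G`-fixed can be moved within its orbit so that `φ 1 = 1`. For such
a normalized pair the permutation `σ` witnessing `(g · (φ, y)) · σ = (φ, y)` is forced, by evaluating
at `1`, to be `(φ g⁻¹)⁻¹`; the remaining equations then say exactly that `g ↦ φ g⁻¹` is a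
homomorphism and that `y` is equivariant along it. Injectivity is the same observation: two
normalized pairs in one orbit differ by `σ = 1`.
-/

namespace PermPair

variable {G X : Type*} [Group G] {j : ℕ}

def ofHom (β : G →* Equiv.Perm (Fin j)) (y : Fin j → X) :
    (G → Equiv.Perm (Fin j)) × (Fin j → X) :=
  (fun g => β g⁻¹, y)

@[simp]
lemma ofHom_fst_one (β : G →* Equiv.Perm (Fin j)) (y : Fin j → X) : (ofHom β y).1 1 = 1 := by
  simp [ofHom]

lemma ofHom_inj {β β' : G →* Equiv.Perm (Fin j)} {y y' : Fin j → X} :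
    ofHom β y = ofHom β' y' ↔ β = β' ∧ y = y' := by
  refine ⟨fun h => ⟨MonoidHom.ext fun g => ?_, congrArg Prod.snd h⟩, fun ⟨hβ, hy⟩ => hβ ▸ hy ▸ rfl⟩
  simpa [ofHom] using congrFun (congrArg Prod.fst h) g⁻¹

lemma eq_one_of_pairRightAct_eq {p q : (G → Equiv.Perm (Fin j)) × (Fin j → X)}
    {σ : Equiv.Perm (Fin j)} (hp : p.1 1 = 1) (hq : q.1 1 = 1) (h : pairRightAct p σ = q) :
    σ = 1 := by
  simpa [pairRightAct, hp, hq] using congrFun (congrArg Prod.fst h) 1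

lemma exists_fst_one_mk_eq [MulAction G X] (r : (G → Equiv.Perm (Fin j)) × (Fin j → X)) :
    ∃ p, p.1 1 = 1 ∧ Quotient.mk (pairSetoid G X j) r = Quotient.mk (pairSetoid G X j) p :=
  ⟨pairRightAct r (r.1 1)⁻¹, mul_inv_cancel (r.1 1), Quotient.sound ⟨_, rfl⟩⟩

variable [MulAction G X]

lemma pairLeftActOrbit_mk_eq_mk_iff {g : G} {p : (G → Equiv.Perm (Fin j)) × (Fin j → X)} :
    pairLeftActOrbit g (Quotient.mk (pairSetoid G X j) p) = Quotient.mk (pairSetoid G X j) p ↔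
      ∃ σ, pairRightAct (pairLeftAct g p) σ = p :=
  Quotient.eq

lemma pairRightAct_pairLeftAct_ofHom {β : G →* Equiv.Perm (Fin j)} {y : Fin j → X}
    (hy : ∀ (g : G) (i : Fin j), y (β g i) = g • y i) (g : G) :
    pairRightAct (pairLeftAct g (ofHom β y)) (β g⁻¹) = ofHom β y := by
  refine Prod.ext (funext fun h => ?_) (funext fun i => ?_)
  · simp only [pairRightAct, pairLeftAct, ofHom, ← map_mul, mul_inv_rev, inv_inv,
      mul_inv_cancel_right]
  · simp only [pairRightAct, pairLeftAct, ofHom, hy, smul_inv_smul]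

lemma pairRightAct_pairLeftAct_eq_iff {g : G} {σ : Equiv.Perm (Fin j)}
    {p : (G → Equiv.Perm (Fin j)) × (Fin j → X)} :
    pairRightAct (pairLeftAct g p) σ = p ↔
      (∀ h, p.1 (g⁻¹ * h) * σ = p.1 h) ∧ ∀ i, g • p.2 (σ i) = p.2 i := by
  simp only [pairRightAct, pairLeftAct, Prod.ext_iff, funext_iff]

lemma eq_inv_of_pairRightAct_pairLeftAct_eq {g : G} {σ : Equiv.Perm (Fin j)}
    {p : (G → Equiv.Perm (Fin j)) × (Fin j → X)} (hp : p.1 1 = 1)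
    (h : pairRightAct (pairLeftAct g p) σ = p) : σ = (p.1 g⁻¹)⁻¹ := by
  have h1 := (pairRightAct_pairLeftAct_eq_iff.mp h).1 1
  rw [mul_one, hp] at h1
  exact eq_inv_of_mul_eq_one_right h1

lemma exists_ofHom_of_fst_one {p : (G → Equiv.Perm (Fin j)) × (Fin j → X)} (hp : p.1 1 = 1)
    (hfix : ∀ g : G, ∃ σ, pairRightAct (pairLeftAct g p) σ = p) :
    ∃ β : G →* Equiv.Perm (Fin j), (∀ (g : G) (i : Fin j), p.2 (β g i) = g • p.2 i) ∧
      ofHom β p.2 = p := by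
  have hfix' (g : G) : pairRightAct (pairLeftAct g p) (p.1 g⁻¹)⁻¹ = p := by
    obtain ⟨σ, hσ⟩ := hfix g
    rwa [eq_inv_of_pairRightAct_pairLeftAct_eq hp hσ] at hσ
  have hfst (g h : G) : p.1 (g⁻¹ * h) = p.1 h * p.1 g⁻¹ := by
    rw [← (pairRightAct_pairLeftAct_eq_iff.mp (hfix' g)).1 h, inv_mul_cancel_right]
  have hsnd (g : G) (i : Fin j) : g • p.2 ((p.1 g⁻¹)⁻¹ i) = p.2 i :=
    (pairRightAct_pairLeftAct_eq_iff.mp (hfix' g)).2 i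
  let β : G →* Equiv.Perm (Fin j) :=
    MonoidHom.mk' (fun g => p.1 g⁻¹) fun a b => by rw [mul_inv_rev, hfst]
  refine ⟨β, fun g i => ?_, Prod.ext (funext fun g => ?_) rfl⟩
  · rw [← hsnd g (β g i)]
    simp [β]
  · simp [ofHom, β]

end PermPair

open PermPair in
/-- The assignment sending a pair `(β, y)`, where `β : G →* Perm (Fin j)` is a
homomorphism and `y : Fin j → X` satisfies `y (β g i) = g • y i`, to the orbit of
`((g ↦ β g⁻¹), y)`, is a bijection onto the set of `G`-fixed orbits. -/
theorem orbits_of_G_sets_bijection (G X : Type*) [Group G] [MulAction G X] (j : ℕ) :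
    Set.BijOn
      (fun p : {q : (G →* Equiv.Perm (Fin j)) × (Fin j → X) //
          ∀ (g : G) (i : Fin j), q.2 (q.1 g i) = g • q.2 i} =>
        Quotient.mk (pairSetoid G X j) ((fun g : G => p.1.1 g⁻¹), p.1.2))
      Set.univ
      {o : Quotient (pairSetoid G X j) | ∀ g : G, pairLeftActOrbit g o = o} := by
  refine ⟨fun p _ g => ?_, fun p _ q _ hpq => ?_, fun o ho => ?_⟩
  · exact Quotient.sound ⟨p.1.1 g⁻¹, pairRightAct_pairLeftAct_ofHom p.2 g⟩
  · obtain ⟨σ, hσ⟩ := Quotient.exact hpq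
    obtain rfl := eq_one_of_pairRightAct_eq (ofHom_fst_one _ _) (ofHom_fst_one _ _) hσ
    rw [pairRightAct_one] at hσ
    obtain ⟨hβ, hy⟩ := ofHom_inj.mp hσ
    exact Subtype.ext (Prod.ext hβ hy)
  · obtain ⟨r, rfl⟩ := o.exists_rep
    obtain ⟨p, hp, hrp⟩ := exists_fst_one_mk_eq r
    rw [hrp] at ho
    obtain ⟨β, hy, hβ⟩ :=
      exists_ofHom_of_fst_one hp fun g => pairLeftActOrbit_mk_eq_mk_iff.mp (ho g)
    exact ⟨⟨(β, p.2), hy⟩, Set.mem_univ _, by rw [hrp]; exact congrArg _ hβ⟩
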